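/- For every n ≥ 1, the Tribonacci word has exactly one right special factor of length n-1, i.e., exactly one factor w of length n-1 such that wa is a factor for at least two distinct letters a; moreover for this w all three of w0, w1, w2 are factors of t. -/

import Mathlib

/-- The Tribonacci morphism τ: 0↦01, 1↦02, 2↦0, extended to words. -/
def tau : List (Fin 3) → List (Fin 3) :=
  fun w => w.flatMap (fun a => if a = 0 then [0, 1] else if a = 1 then [0, 2] else [0])

/-- The Tribonacci word, the fixed point of τ starting with 0.
Since τⁿ(0) is a prefix of τⁿ⁺¹(0) and |τ^(n+1)(0)| > n, this is well defined. -/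
def trib : ℕ → Fin 3 := fun n => (tau^[n + 1] [0]).getD n 0

/-- `u` is a (finite, contiguous) factor of the Tribonacci word. -/
def IsFactor (u : List (Fin 3)) : Prop :=
  ∃ i : ℕ, u = (List.range u.length).map (fun j => trib (i + j))

/-- `w` is a right special factor of the Tribonacci word. -/
def RightSpecial (w : List (Fin 3)) : Prop :=
  IsFactor w ∧ ∃ a b : Fin 3, a ≠ b ∧ IsFactor (w ++ [a]) ∧ IsFactor (w ++ [b])

/-!
No factor of `t` contains two adjacent nonzero letters, so a factor is cut uniquely into the
blocks `01`, `02`, `0` of `τ`; a trailing `0` marks a block boundary, whence `τ(v)0` is a factor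
only if `v` is, and `τ(v)0a` is a factor iff `v(a-1)` is. A nonempty right special factor ends
in `0` and, after prefixing a `0` when it starts with `1` or `2`, has the form `τ(v)0` with `v`
right special and shorter. By induction every right special `w` is a suffix of `U_|w|`, where
`U₀ = ε` and `U_{j+1} = τ(U_j)0`, while every letter can follow `U_j`; so the right special
factor of length `m` is the suffix of length `m` of `U_m`.
-/

@[simp] lemma tau_nil : tau [] = [] := rfl

@[simp] lemma tau_append (u v : List (Fin 3)) : tau (u ++ v) = tau u ++ tau v :=
  List.flatMap_append

lemma tau_cons (a : Fin 3) (v : List (Fin 3)) : tau (a :: v) = tau [a] ++ tau v :=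
  tau_append [a] v

@[simp] lemma tau_singleton_zero : tau [0] = [0, 1] := rfl

@[simp] lemma tau_singleton_one : tau [1] = [0, 2] := rfl

@[simp] lemma tau_singleton_two : tau [2] = [0] := rfl

lemma head_tau (v : List (Fin 3)) : ∀ c ∈ (tau v).head?, c = 0 := by
  cases v with
  | nil => simp
  | cons a v => rw [tau_cons]; fin_cases a <;> simp

lemma length_tau (v : List (Fin 3)) : (tau v).length = v.length + v.countP (· ≠ 2) := by
  induction v with
  | nil => rfl
  | cons a v ih => rw [tau_cons]; fin_cases a <;> simp [ih] <;> omega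

lemma length_le_length_tau (v : List (Fin 3)) : v.length ≤ (tau v).length := by
  simp [length_tau]

lemma length_lt_length_tau {v : List (Fin 3)} (h : 0 ∈ v) : v.length < (tau v).length := by
  rw [length_tau, Nat.lt_add_right_iff_pos, List.countP_pos_iff]
  exact ⟨0, h, by decide⟩

lemma isChain_tau (v : List (Fin 3)) : (tau v).IsChain (fun p q => p = 0 ∨ q = 0) := by
  induction v with
  | nil => simp
  | cons a v ih =>
    rw [tau_cons, List.isChain_append]
    refine ⟨by fin_cases a <;> simp, ih, fun _ _ y hy => Or.inr (head_tau v y hy)⟩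

/-- Left inverse of `tau`: parses a word into the blocks `01`, `02`, `0`, without inspecting the
first letter of a block. -/
def untau : List (Fin 3) → List (Fin 3)
  | _ :: b :: r => if b = 1 then 0 :: untau r else if b = 2 then 1 :: untau r else 2 :: untau (b :: r)
  | [_] => [2]
  | [] => []

lemma untau_append (s : List (Fin 3)) {w : List (Fin 3)} (hw : ∀ c ∈ w.head?, c = 0) :
    untau (s ++ w) = untau s ++ untau w := by
  induction s using untau.induct with
  | case1 a r ih => simp [untau, ih]
  | case2 a r _ ih => simp [untau, ih]
  | case3 a b r h1 h2 ih => simp [untau, h1, h2, ← ih]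
  | case4 a =>
    cases w with
    | nil => rfl
    | cons c w => simp [untau, hw c rfl]
  | case5 => rfl

lemma untau_tau (v : List (Fin 3)) : untau (tau v) = v := by
  induction v with
  | nil => rfl
  | cons a v ih =>
    rw [tau_cons, untau_append _ (head_tau v), ih]
    fin_cases a <;> rfl

lemma tau_untau {u : List (Fin 3)} (hu : u.IsChain (fun p q => p = 0 ∨ q = 0))
    (h0 : ∀ c ∈ u.head?, c = 0) : tau (untau u) = u := by
  induction u using untau.induct with
  | case1 a r ih | case2 a r _ ih =>
    have hr := (List.isChain_cons_cons.mp hu).2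
    have hr0 : ∀ c ∈ r.head?, c = 0 := fun c hc => (hr.rel_head? hc).resolve_left (by decide)
    simp only [untau, h0 a rfl, reduceIte, Fin.reduceEq]
    rw [tau_cons, ih (List.isChain_cons.mp hr).2 hr0]
    rfl
  | case3 a b r h1 h2 ih =>
    have hb : b = 0 := by omega
    have ih' := ih (List.isChain_cons_cons.mp hu).2 (by simp [hb])
    simp only [untau, if_neg h1, if_neg h2]
    rw [tau_cons, ih', h0 a rfl, hb]
    rfl
  | case4 a => simp [untau, h0 a rfl]
  | case5 => rfl

lemma head_tau_append (v : List (Fin 3)) {w : List (Fin 3)} (hw : ∀ c ∈ w.head?, c = 0) :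
    ∀ c ∈ (tau v ++ w).head?, c = 0 := by
  cases v with
  | nil => simpa using hw
  | cons a v => rw [tau_cons]; fin_cases a <;> simp

lemma infix_of_tau_append_zero_infix_tau {v x : List (Fin 3)} (h : tau v ++ [0] <:+: tau x) :
    v <:+: x := by
  obtain ⟨s, t, hst⟩ := h
  have hx : tau x = s ++ (tau v ++ 0 :: t) := by simp [← hst]
  have hdecode : x = untau s ++ (v ++ untau (0 :: t)) := by
    rw [← untau_tau x, hx, untau_append s (head_tau_append v (by simp)),
      untau_append _ (by simp), untau_tau]
  exact ⟨untau s, untau (0 :: t), by rw [hdecode, List.append_assoc]⟩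

def tribPrefix (k : ℕ) : List (Fin 3) := tau^[k] [0]

lemma tribPrefix_succ (k : ℕ) : tribPrefix (k + 1) = tau (tribPrefix k) :=
  Function.iterate_succ_apply' tau k [0]

lemma tribPrefix_prefix_succ (k : ℕ) : tribPrefix k <+: tribPrefix (k + 1) := by
  induction k with
  | zero => exact ⟨[1], rfl⟩
  | succ k ih => rw [tribPrefix_succ, tribPrefix_succ (k + 1)]; exact ih.flatMap _

lemma tribPrefix_prefix {k m : ℕ} (h : k ≤ m) : tribPrefix k <+: tribPrefix m := by
  induction m, h using Nat.le_induction with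
  | base => exact List.prefix_refl _
  | succ m _ ih => exact ih.trans (tribPrefix_prefix_succ m)

lemma length_tribPrefix (k : ℕ) : k < (tribPrefix k).length := by
  induction k with
  | zero => simp [tribPrefix]
  | succ k ih =>
    have h0 : 0 ∈ tribPrefix k := (tribPrefix_prefix k.zero_le).subset (by simp [tribPrefix])
    have := length_lt_length_tau h0
    rw [tribPrefix_succ]
    omega

lemma getD_tribPrefix {k n : ℕ} (hn : n < (tribPrefix k).length) :
    (tribPrefix k).getD n 0 = trib n := by
  have key {k m : ℕ} (h : k ≤ m) (hn : n < (tribPrefix k).length) :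
      (tribPrefix k).getD n 0 = (tribPrefix m).getD n 0 := by
    obtain ⟨r, hr⟩ := tribPrefix_prefix h
    rw [← hr, List.getD_append _ _ _ _ hn]
  rcases le_total k (n + 1) with h | h
  · exact key h hn
  · exact (key h (length_tribPrefix (n + 1) |>.trans' n.lt_succ_self)).symm

lemma isFactor_iff {u : List (Fin 3)} : IsFactor u ↔ ∃ k, u <:+: tribPrefix k := by
  have hget {k n : ℕ} (hn : n < (tribPrefix k).length) : (tribPrefix k)[n]? = some (trib n) := by
    rw [← getD_tribPrefix hn, List.getD_eq_getElem _ _ hn, List.getElem?_eq_getElem hn]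
  simp only [List.infix_iff_getElem?]
  constructor
  · rintro ⟨i, hu⟩
    have hlen := length_tribPrefix (i + u.length)
    refine ⟨i + u.length, i, by omega, fun j hj => ?_⟩
    rw [hget (by omega), List.getElem_of_eq hu]
    simp [Nat.add_comm i j]
  · rintro ⟨k, i, hlen, hu⟩
    refine ⟨i, List.ext_getElem (by simp) fun j hj _ => ?_⟩
    have := (hu j hj).symm.trans (hget (by omega))
    simp_all [Nat.add_comm i j]

namespace IsFactor

variable {u v : List (Fin 3)}

lemma of_infix (hv : IsFactor v) (h : u <:+: v) : IsFactor u := by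
  obtain ⟨k, hk⟩ := isFactor_iff.mp hv
  exact isFactor_iff.mpr ⟨k, h.trans hk⟩

lemma exists_append_singleton (hu : IsFactor u) : ∃ c, IsFactor (u ++ [c]) := by
  obtain ⟨i, hu⟩ := hu
  refine ⟨trib (i + u.length), i, ?_⟩
  nth_rewrite 1 [hu]
  simp [List.range_succ]

lemma infix_tau_tribPrefix (hu : IsFactor u) : ∃ k, u <:+: tau (tribPrefix k) := by
  obtain ⟨k, hk⟩ := isFactor_iff.mp hu
  exact ⟨k, tribPrefix_succ k ▸ hk.trans (tribPrefix_prefix_succ k).isInfix⟩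

lemma tau_append_zero (hu : IsFactor u) : IsFactor (tau u ++ [0]) := by
  obtain ⟨c, hc⟩ := hu.exists_append_singleton
  obtain ⟨k, hk⟩ := isFactor_iff.mp hc
  have hτ : tau (u ++ [c]) <:+: tribPrefix (k + 1) := by
    rw [tribPrefix_succ]
    exact hk.flatMap _
  have hpre : tau u ++ [0] <+: tau (u ++ [c]) := by
    rw [tau_append, List.prefix_append_right_inj]
    fin_cases c <;> simp
  exact isFactor_iff.mpr ⟨k + 1, hpre.isInfix.trans hτ⟩

lemma of_tau_append_zero (h : IsFactor (tau u ++ [0])) : IsFactor u := by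
  obtain ⟨k, hk⟩ := h.infix_tau_tribPrefix
  exact isFactor_iff.mpr ⟨k, infix_of_tau_append_zero_infix_tau hk⟩

lemma tau (hu : IsFactor u) : IsFactor (tau u) :=
  hu.tau_append_zero.of_infix (List.prefix_append _ _).isInfix

lemma isChain (hu : IsFactor u) : u.IsChain (fun p q => p = 0 ∨ q = 0) := by
  obtain ⟨k, hk⟩ := hu.infix_tau_tribPrefix
  exact (isChain_tau _).infix hk

lemma append_zero {p : Fin 3} (h : IsFactor (u ++ [p])) (hp : p ≠ 0) :
    IsFactor (u ++ [p, 0]) := by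
  obtain ⟨c, hc⟩ := h.exists_append_singleton
  have hc0 : c = 0 :=
    (List.isChain_pair.mp (hc.of_infix ⟨u, [], by simp⟩).isChain).resolve_left hp
  simpa [hc0] using hc

lemma zero_cons {c : Fin 3} (hu : IsFactor (c :: u)) (hc : c ≠ 0) : IsFactor (0 :: c :: u) := by
  obtain ⟨k, s, t, hst⟩ := isFactor_iff.mp hu
  rcases s.eq_nil_or_concat' with rfl | ⟨s, e, rfl⟩
  · have h0 : [0] <+: tribPrefix k := tribPrefix_prefix k.zero_le
    rw [← hst] at h0
    simp at h0
    exact absurd h0.symm hc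
  · have hec : IsFactor [e, c] := isFactor_iff.mpr ⟨k, s, u ++ t, by rw [← hst]; simp⟩
    have he : e = 0 := (List.isChain_pair.mp hec.isChain).resolve_right hc
    exact isFactor_iff.mpr ⟨k, s, t, by rw [← hst, he]; simp⟩

end IsFactor

lemma isFactor_tau_append_zero_cons_iff {v : List (Fin 3)} {a : Fin 3} :
    IsFactor (tau v ++ [0, a]) ↔ IsFactor (v ++ [a - 1]) := by
  suffices IsFactor (tau v ++ [0, a]) ↔ IsFactor (tau (v ++ [a - 1]) ++ [0]) from
    this.trans ⟨IsFactor.of_tau_append_zero, IsFactor.tau_append_zero⟩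
  by_cases ha : a = 0
  · subst ha
    simp [show (0 : Fin 3) - 1 = 2 by decide]
  · have hτ : tau (v ++ [a - 1]) ++ [0] = (tau v ++ [0]) ++ [a, 0] := by
      fin_cases a <;> simp_all
    rw [hτ]
    refine ⟨fun h => IsFactor.append_zero (by simpa using h) ha, fun h => h.of_infix ?_⟩
    exact ⟨[], [0], by simp⟩

namespace RightSpecial

variable {u v w : List (Fin 3)}

lemma of_tau_append_zero (h : RightSpecial (tau v ++ [0])) : RightSpecial v := by
  obtain ⟨-, a, b, hab, ha, hb⟩ := h
  have ha' := isFactor_tau_append_zero_cons_iff.mp (by simpa using ha)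
  have hb' := isFactor_tau_append_zero_cons_iff.mp (by simpa using hb)
  exact ⟨ha'.of_infix (List.prefix_append _ _).isInfix, a - 1, b - 1,
    fun h => hab (sub_left_injective h), ha', hb'⟩

lemma exists_eq_append_zero (h : RightSpecial w) (hne : w ≠ []) : ∃ u, w = u ++ [0] := by
  obtain ⟨-, a, b, hab, ha, hb⟩ := h
  obtain ⟨u, c, rfl⟩ := (w.eq_nil_or_concat'.resolve_left hne)
  refine ⟨u, ?_⟩
  by_contra hu
  have hc : c ≠ 0 := fun h => hu (by rw [h])
  have next_zero {d : Fin 3} (hd : IsFactor (u ++ [c] ++ [d])) : d = 0 :=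
    (List.isChain_pair.mp (hd.of_infix ⟨u, [], by simp⟩).isChain).resolve_left hc
  exact hab ((next_zero ha).trans (next_zero hb).symm)

lemma zero_cons {c : Fin 3} (h : RightSpecial (c :: u)) (hc : c ≠ 0) :
    RightSpecial (0 :: c :: u) := by
  obtain ⟨hu, a, b, hab, ha, hb⟩ := h
  exact ⟨hu.zero_cons hc, a, b, hab, ha.zero_cons hc, hb.zero_cons hc⟩

lemma untau_of_append_zero (h : RightSpecial (u ++ [0])) (hu : ∀ c ∈ u.head?, c = 0) :
    tau (untau u) = u ∧ RightSpecial (untau u) := by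
  have hτ : tau (untau u) = u :=
    tau_untau (h.1.of_infix (List.prefix_append _ _).isInfix).isChain hu
  exact ⟨hτ, of_tau_append_zero (by rwa [hτ])⟩

lemma length_lt_length_tau (h : RightSpecial v) (hne : v ≠ []) :
    v.length < (tau v).length := by
  obtain ⟨u, rfl⟩ := h.exists_eq_append_zero hne
  exact _root_.length_lt_length_tau (by simp)

lemma exists_desubstitution (h : RightSpecial w) (hne : w ≠ []) :
    ∃ v, RightSpecial v ∧ v.length < w.length ∧ w <:+ tau v ++ [0] := by
  obtain ⟨u, rfl⟩ := h.exists_eq_append_zero hne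
  by_cases hu : ∀ c ∈ u.head?, c = 0
  · obtain ⟨hτ, hv⟩ := h.untau_of_append_zero hu
    refine ⟨untau u, hv, ?_, by rw [hτ]⟩
    have := length_le_length_tau (untau u)
    rw [hτ] at this
    simp only [List.length_append, List.length_singleton]
    omega
  · obtain ⟨c, u, rfl⟩ : ∃ c u', u = c :: u' := by
      cases u with
      | nil => simp at hu
      | cons c u => exact ⟨c, u, rfl⟩
    have hc : c ≠ 0 := by simpa using hu
    obtain ⟨hτ, hv⟩ := (h.zero_cons hc).untau_of_append_zero (u := 0 :: c :: u) (by simp)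
    have hne : untau (0 :: c :: u) ≠ [] := fun h => by simp [h] at hτ
    have hlt := hv.length_lt_length_tau hne
    rw [hτ] at hlt
    refine ⟨_, hv, by simpa using hlt, ?_⟩
    rw [hτ]
    exact List.suffix_cons _ _

end RightSpecial

/-- The bispecial factors `ε, 0, 010, 0102010, …` of the Tribonacci word. -/
def bispecialWord : ℕ → List (Fin 3)
  | 0 => []
  | j + 1 => tau (bispecialWord j) ++ [0]

lemma isFactor_bispecialWord_append (j : ℕ) (a : Fin 3) : IsFactor (bispecialWord j ++ [a]) := by
  induction j generalizing a with
  | zero => fin_cases a; exacts [⟨0, by decide⟩, ⟨1, by decide⟩, ⟨3, by decide⟩]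
  | succ j ih => simpa [bispecialWord] using isFactor_tau_append_zero_cons_iff.mpr (ih (a - 1))

lemma le_length_bispecialWord (j : ℕ) : j ≤ (bispecialWord j).length := by
  induction j with
  | zero => exact le_rfl
  | succ j ih =>
    have := length_le_length_tau (bispecialWord j)
    simp only [bispecialWord, List.length_append, List.length_singleton]
    omega

lemma bispecialWord_suffix_succ (j : ℕ) : bispecialWord j <:+ bispecialWord (j + 1) := by
  induction j with
  | zero => exact List.nil_suffix
  | succ j ih => exact List.suffix_append_self_iff.mpr (ih.flatMap _)

lemma bispecialWord_suffix_of_le {j k : ℕ} (h : j ≤ k) : bispecialWord j <:+ bispecialWord k := by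
  induction k, h using Nat.le_induction with
  | base => exact List.suffix_refl _
  | succ k _ ih => exact ih.trans (bispecialWord_suffix_succ k)

lemma RightSpecial.suffix_bispecialWord {w : List (Fin 3)} (h : RightSpecial w) :
    w <:+ bispecialWord w.length := by
  induction hlen : w.length using Nat.strong_induction_on generalizing w with
  | _ n ih =>
    rcases eq_or_ne w [] with rfl | hne
    · exact List.nil_suffix
    obtain ⟨v, hv, hlt, hsuf⟩ := h.exists_desubstitution hne
    have hvU : tau v ++ [0] <:+ bispecialWord (v.length + 1) :=
      List.suffix_append_self_iff.mpr ((ih _ (hlen ▸ hlt) hv rfl).flatMap _)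
    exact hsuf.trans (hvU.trans (bispecialWord_suffix_of_le (by omega)))

theorem tribonacci_unique_right_special_general (n : ℕ) :
    (∃! w : List (Fin 3), w.length = n - 1 ∧ RightSpecial w) ∧
    (∀ w : List (Fin 3), w.length = n - 1 → RightSpecial w →
      ∀ a : Fin 3, IsFactor (w ++ [a])) := by
  have hU := le_length_bispecialWord (n - 1)
  set U := bispecialWord (n - 1)
  set S := U.drop (U.length - (n - 1))
  have hS : S.length = n - 1 := by
    simp only [S, List.length_drop]
    omega
  have hext (a : Fin 3) : IsFactor (S ++ [a]) :=
    (isFactor_bispecialWord_append _ a).of_infix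
      (List.suffix_append_self_iff.mpr (List.drop_suffix _ _)).isInfix
  have huniq (w : List (Fin 3)) (hw : w.length = n - 1) (h : RightSpecial w) : w = S := by
    have hsuf : w <:+ U := by simpa only [hw] using h.suffix_bispecialWord
    rw [List.suffix_iff_eq_drop.mp hsuf, hw]
  have hSpecial : RightSpecial S :=
    ⟨(hext 0).of_infix (List.prefix_append _ _).isInfix, 0, 1, by decide, hext 0, hext 1⟩
  exact ⟨⟨S, ⟨hS, hSpecial⟩, fun w ⟨hw, h⟩ => huniq w hw h⟩,
    fun w hw h a => huniq w hw h ▸ hext a⟩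

theorem tribonacci_unique_right_special (n : ℕ) (hn : 1 ≤ n) :
    (∃! w : List (Fin 3), w.length = n - 1 ∧ RightSpecial w) ∧
    (∀ w : List (Fin 3), w.length = n - 1 → RightSpecial w →
      ∀ a : Fin 3, IsFactor (w ++ [a])) :=
  tribonacci_unique_right_special_general n
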